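/- arXiv:2204.09107 — 4 statements merged into one kernel-verified Lean document; each statement's English description precedes it below -/
import Mathlib

section
/- Let 0 < β < α ≤ 1 and let G be an n-vertex α-expander. Then for every non-empty set X ⊆ V(G) with |X| ≤ ((α−β)²/(4(α−β)+2))·n, there exists a set Y ⊆ V(G)\X with |Y| < |X|/(α−β) such that the induced subgraph G − (X ∪ Y) is a β-expander. -/
/-! Greedy removal: while `G - (X ∪ Y)` is not a `β`-expander, move a non-expanding set `U` of it
into `Y`. This keeps `|N(Y) \ X| ≤ β|Y|`, so as long as `|Y| ≤ n/2` the `α`-expansion of `Y` gives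
`α|Y| ≤ |X| + β|Y|`, i.e. `|Y| < |X|/(α - β)`. The size bound on `X` rules out `|Y ∪ U| > n/2`:
then a subset of `Y ∪ U` of size `⌊n/2⌋` would expand by more than `Y ∪ U` leaves room for. -/

open Finset

variable {V : Type*}

/-- The external neighborhood of a vertex set `X` in a graph `G`:
vertices outside `X` with a neighbor in `X`. -/
noncomputable def extNbhd [Fintype V] (G : SimpleGraph V) (X : Finset V) : Finset V :=
  @Finset.filter V (fun v => v ∉ X ∧ ∃ u ∈ X, G.Adj u v) (Classical.decPred _) Finset.univ

/-- An `n`-vertex graph is an `α`-expander if every vertex set of size at most `n/2`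
has external neighborhood of size at least `α` times its size. -/
def IsExpander [Fintype V] (G : SimpleGraph V) (α : ℝ) : Prop :=
  ∀ X : Finset V, (X.card : ℝ) ≤ (Fintype.card V : ℝ) / 2 →
    α * (X.card : ℝ) ≤ ((extNbhd G X).card : ℝ)

/-- Expansion of the induced subgraph of `G` on the vertex set `W`:
every `U ⊆ W` of size at most `|W|/2` has external neighborhood (inside `W`) of
size at least `β|U|`. -/
def IsExpanderOn [Fintype V] [DecidableEq V] (G : SimpleGraph V) (W : Finset V) (β : ℝ) : Prop :=
  ∀ U : Finset V, U ⊆ W → (U.card : ℝ) ≤ (W.card : ℝ) / 2 →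
    β * (U.card : ℝ) ≤ (((extNbhd G U) ∩ W).card : ℝ)

section

variable [Fintype V] {G : SimpleGraph V}

lemma mem_extNbhd {X : Finset V} {v : V} : v ∈ extNbhd G X ↔ v ∉ X ∧ ∃ u ∈ X, G.Adj u v := by
  simp [extNbhd]

@[simp]
lemma extNbhd_empty : extNbhd G ∅ = ∅ := by
  ext
  simp [mem_extNbhd]

variable [DecidableEq V]

lemma extNbhd_subset_sdiff_union {S' S : Finset V} (h : S' ⊆ S) :
    extNbhd G S' ⊆ (S \ S') ∪ extNbhd G S := by
  intro v hv
  obtain ⟨hvS', u, hu, huv⟩ := mem_extNbhd.1 hv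
  by_cases hvS : v ∈ S
  · exact mem_union_left _ (mem_sdiff.2 ⟨hvS, hvS'⟩)
  · exact mem_union_right _ (mem_extNbhd.2 ⟨hvS, u, h hu, huv⟩)

lemma extNbhd_union_sdiff_subset (X Y U : Finset V) :
    extNbhd G (Y ∪ U) \ X ⊆ (extNbhd G Y \ X) ∪ (extNbhd G U ∩ (X ∪ Y)ᶜ) := by
  intro v hv
  simp only [mem_sdiff, mem_extNbhd, mem_union, mem_inter, mem_compl] at hv ⊢
  grind

lemma IsExpander.mul_card_le {α : ℝ} (hG : IsExpander G α) {S' S : Finset V} (hS : S' ⊆ S)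
    (h : (S'.card : ℝ) ≤ Fintype.card V / 2) :
    α * S'.card ≤ (S \ S').card + (extNbhd G S).card := by
  have hsub := (card_le_card (extNbhd_subset_sdiff_union (G := G) hS)).trans
    (card_union_le (S \ S') (extNbhd G S))
  have hcast : ((extNbhd G S').card : ℝ) ≤ (S \ S').card + (extNbhd G S).card := by
    exact_mod_cast hsub
  linarith [hG S' h]

end

/-- The constraints met when the removed set `Y ∪ U` has more than `n/2` vertices, where
`n = |V|`, `x = |X|`, `y = |Y|`, `u = |U|` and `m = ⌊n/2⌋`. -/
lemma removal_arith_inconsistent {α β n x y u m : ℝ} (hβ : 0 < β) (hβα : β < α) (hα : α ≤ 1)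
    (hx : 1 ≤ x) (hxn : x * (4 * (α - β) + 2) ≤ (α - β) ^ 2 * n)
    (hy : (α - β) * y < x) (hu : 2 * u ≤ n - x - y) (hm : n - 1 ≤ 2 * m)
    (hexp : α * m ≤ (y + u) - m + x + β * (y + u)) : False := by
  have hd : 0 < α - β := by linarith
  have h1 : (1 + α) * (n - 1) ≤ (1 + β) * (n - x + y) + 2 * x := by nlinarith
  nlinarith [mul_le_mul_of_nonneg_left h1 hd.le,
    mul_lt_mul_of_pos_left hy (by linarith : (0 : ℝ) < 1 + β),
    mul_nonneg (mul_nonneg (by linarith : (0 : ℝ) ≤ 1 - β) (by linarith : (0 : ℝ) ≤ 1 - (α - β)))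
      (by linarith : (0 : ℝ) ≤ x),
    mul_nonneg hd.le (by linarith : (0 : ℝ) ≤ x - 1)]

/-- The state of the greedy removal: `Y` is what has been removed besides `X` so far. -/
structure RemovalInvariant [Fintype V] [DecidableEq V] (G : SimpleGraph V) (α β : ℝ)
    (X Y : Finset V) : Prop where
  disjoint : Disjoint Y X
  card_extNbhd_sdiff_le : ((extNbhd G Y \ X).card : ℝ) ≤ β * Y.card
  card_lt : (α - β) * Y.card < X.card

namespace RemovalInvariant

variable [Fintype V] [DecidableEq V] {G : SimpleGraph V} {α β : ℝ} {X Y U : Finset V}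

lemma empty (hX : (0 : ℝ) < X.card) : RemovalInvariant G α β X ∅ where
  disjoint := disjoint_empty_left X
  card_extNbhd_sdiff_le := by simp
  card_lt := by simpa using hX

lemma union (hβ : 0 < β) (hβα : β < α) (hα : α ≤ 1) (hG : IsExpander G α)
    (hx : (1 : ℝ) ≤ X.card)
    (hXn : (X.card : ℝ) * (4 * (α - β) + 2) ≤ (α - β) ^ 2 * Fintype.card V)
    (hY : RemovalInvariant G α β X Y) (hUW : U ⊆ (X ∪ Y)ᶜ)
    (hUhalf : (U.card : ℝ) ≤ ((X ∪ Y)ᶜ.card : ℝ) / 2)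
    (hUexp : ((extNbhd G U ∩ (X ∪ Y)ᶜ).card : ℝ) < β * U.card) :
    RemovalInvariant G α β X (Y ∪ U) := by
  have hUXY : ∀ v ∈ U, v ∉ X ∧ v ∉ Y := fun v hv => by simpa using hUW hv
  have hUX : Disjoint U X := disjoint_left.2 fun v hv => (hUXY v hv).1
  have hYU : Disjoint Y U := disjoint_right.2 fun v hv => (hUXY v hv).2
  have hcard : ((Y ∪ U).card : ℝ) = Y.card + U.card := by
    rw [card_union_of_disjoint hYU, Nat.cast_add]
  have hT : ((extNbhd G (Y ∪ U) \ X).card : ℝ) < β * (Y ∪ U).card := by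
    have hsub := (card_le_card (extNbhd_union_sdiff_subset (G := G) X Y U)).trans
      (card_union_le _ _)
    have hcast : ((extNbhd G (Y ∪ U) \ X).card : ℝ) ≤
        (extNbhd G Y \ X).card + (extNbhd G U ∩ (X ∪ Y)ᶜ).card := by exact_mod_cast hsub
    rw [hcard]
    linarith [hY.card_extNbhd_sdiff_le]
  have hN : ((extNbhd G (Y ∪ U)).card : ℝ) < X.card + β * (Y ∪ U).card := by
    have : ((extNbhd G (Y ∪ U)).card : ℝ) ≤ (extNbhd G (Y ∪ U) \ X).card + X.card := by
      exact_mod_cast card_le_card_sdiff_add_card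
    linarith
  refine ⟨disjoint_union_left.2 ⟨hY.disjoint, hUX⟩, hT.le, ?_⟩
  by_cases hsmall : ((Y ∪ U).card : ℝ) ≤ Fintype.card V / 2
  · linarith [hG _ hsmall]
  -- `Y ∪ U` cannot exceed `n/2`: the `α`-expansion of a subset of size `⌊n/2⌋` is too large
  exfalso
  set m := Fintype.card V / 2
  have hm : (m : ℝ) ≤ Fintype.card V / 2 := Nat.cast_div_le
  obtain ⟨S', hS', hS'card⟩ := exists_subset_card_eq (s := Y ∪ U) (n := m)
    (by exact_mod_cast hm.trans (not_le.1 hsmall).le)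
  have hexp := hG.mul_card_le hS' (by rwa [hS'card])
  rw [card_sdiff_of_subset hS', Nat.cast_sub (card_le_card hS'), hS'card] at hexp
  have hW : (((X ∪ Y)ᶜ).card : ℝ) = Fintype.card V - X.card - Y.card := by
    rw [card_compl, Nat.cast_sub (card_le_univ _), card_union_of_disjoint hY.disjoint.symm]
    push_cast
    ring
  have hm' : (Fintype.card V : ℝ) - 1 ≤ 2 * m := by
    have : Fintype.card V ≤ 2 * m + 1 := by omega
    have : (Fintype.card V : ℝ) ≤ 2 * m + 1 := by exact_mod_cast this
    linarith
  rw [hcard] at hexp hN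
  exact removal_arith_inconsistent (u := U.card) hβ hβα hα hx hXn hY.card_lt (by linarith) hm'
    (by linarith)

theorem exists_isExpanderOn {Y : Finset V} (hβ : 0 < β) (hβα : β < α) (hα : α ≤ 1)
    (hG : IsExpander G α) (hx : (1 : ℝ) ≤ X.card)
    (hXn : (X.card : ℝ) * (4 * (α - β) + 2) ≤ (α - β) ^ 2 * Fintype.card V)
    (hY : RemovalInvariant G α β X Y) :
    ∃ Y', RemovalInvariant G α β X Y' ∧ IsExpanderOn G (X ∪ Y')ᶜ β := by
  by_cases hexp : IsExpanderOn G (X ∪ Y)ᶜ β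
  · exact ⟨Y, hY, hexp⟩
  obtain ⟨U, hUW, hUhalf, hUexp⟩ : ∃ U ⊆ (X ∪ Y)ᶜ, (U.card : ℝ) ≤ ((X ∪ Y)ᶜ.card : ℝ) / 2 ∧
      ((extNbhd G U ∩ (X ∪ Y)ᶜ).card : ℝ) < β * U.card := by
    simpa [IsExpanderOn] using hexp
  obtain ⟨u, hu⟩ : U.Nonempty := by
    rw [nonempty_iff_ne_empty]
    rintro rfl
    simp at hUexp
  have hdecr : ((X ∪ (Y ∪ U))ᶜ).card < ((X ∪ Y)ᶜ).card := by
    refine card_lt_card (ssubset_iff_of_subset (compl_subset_compl.2 ?_) |>.2 ⟨u, hUW hu, ?_⟩)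
    · exact union_subset_union_right subset_union_left
    · simp [hu]
  exact exists_isExpanderOn hβ hβα hα hG hx hXn (hY.union hβ hβα hα hG hx hXn hUW hUhalf hUexp)
termination_by ((X ∪ Y)ᶜ).card
decreasing_by exact hdecr

end RemovalInvariant

/-- The removal lemma: deleting a small set X from an α-expander, one can delete a further
set Y of size < |X|/(α-β) so that the remaining induced subgraph is a β-expander. -/
theorem stmt1 [Fintype V] [DecidableEq V] (G : SimpleGraph V) (α β : ℝ)
    (hβ : 0 < β) (hβα : β < α) (hα : α ≤ 1) (hG : IsExpander G α)
    (X : Finset V) (hX : X.Nonempty)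
    (hXcard : (X.card : ℝ) ≤ (α - β) ^ 2 / (4 * (α - β) + 2) * (Fintype.card V : ℝ)) :
    ∃ Y : Finset V, Disjoint Y X ∧ (Y.card : ℝ) < (X.card : ℝ) / (α - β) ∧
      IsExpanderOn G ((X ∪ Y)ᶜ) β := by
  have hd : 0 < α - β := by linarith
  have hx : (1 : ℝ) ≤ X.card := by exact_mod_cast hX.card_pos
  have hXn : (X.card : ℝ) * (4 * (α - β) + 2) ≤ (α - β) ^ 2 * Fintype.card V := by
    rwa [div_mul_eq_mul_div, le_div_iff₀ (by linarith)] at hXcard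
  obtain ⟨Y, hY, hexp⟩ := RemovalInvariant.exists_isExpanderOn hβ hβα hα hG hx hXn
    (.empty (by linarith))
  exact ⟨Y, hY.disjoint, (lt_div_iff₀ hd).2 (by linarith [hY.card_lt]), hexp⟩
end

section
/- Let 0 < β < α, let G be an n-vertex α-expander, and let X ⊆ V(G). Suppose Y is a maximum-size element of the collection Z := {Z ⊆ V(G)\X : |N_{G−X}(Z)| < β|Z| and |Z| ≤ n/2}, assumed non-empty. Then |Y| < |X|/(α−β). -/
open Finset

variable {V : Type*}

theorem IsExpander.mul_card_le_card_extNbhd_sdiff_add [Fintype V] [DecidableEq V]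
    {G : SimpleGraph V} {α : ℝ} (hG : IsExpander G α) (X : Finset V) {Y : Finset V}
    (hYhalf : (Y.card : ℝ) ≤ (Fintype.card V : ℝ) / 2) :
    α * (Y.card : ℝ) ≤ ((extNbhd G Y \ X).card : ℝ) + (X.card : ℝ) :=
  (hG Y hYhalf).trans (mod_cast card_le_card_sdiff_add_card)

theorem stmt2_general [Fintype V] [DecidableEq V] (G : SimpleGraph V) (α β : ℝ)
    (hβα : β < α) (hG : IsExpander G α) (X Y : Finset V)
    (hYexp : ((extNbhd G Y \ X).card : ℝ) < β * (Y.card : ℝ))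
    (hYhalf : (Y.card : ℝ) ≤ (Fintype.card V : ℝ) / 2) :
    (Y.card : ℝ) < (X.card : ℝ) / (α - β) := by
  have hexp := hG.mul_card_le_card_extNbhd_sdiff_add X hYhalf
  rw [lt_div_iff₀ (sub_pos.2 hβα)]
  linarith

/-- If Y is a maximum-size subset of V∖X with |N_{G-X}(Y)| < β|Y| and |Y| ≤ n/2,
then |Y| < |X|/(α-β). -/
theorem stmt2 [Fintype V] [DecidableEq V] (G : SimpleGraph V) (α β : ℝ)
    (hβ : 0 < β) (hβα : β < α) (hG : IsExpander G α) (X Y : Finset V)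
    (hYdisj : Disjoint Y X)
    (hYexp : ((extNbhd G Y \ X).card : ℝ) < β * (Y.card : ℝ))
    (hYhalf : (Y.card : ℝ) ≤ (Fintype.card V : ℝ) / 2)
    (hYmax : ∀ Z : Finset V, Disjoint Z X →
      ((extNbhd G Z \ X).card : ℝ) < β * (Z.card : ℝ) →
      (Z.card : ℝ) ≤ (Fintype.card V : ℝ) / 2 → Z.card ≤ Y.card) :
    (Y.card : ℝ) < (X.card : ℝ) / (α - β) :=
  stmt2_general G α β hβα hG X Y hYexp hYhalf
end

section
/- Let k be a positive integer and z_1, …, z_m ∈ ℤ_k. For i = 1, …, m+1 define B_i := {Σ_{j ∈ J} z_j : J ⊆ {1, …, i−1}} ⊆ ℤ_k. If for every i ≤ m the element z_i does not lie in the stabilizer of B_i in (ℤ_k, +), then |B_{i}| ≥ i for all i = 1, …, m+1. In particular, if m ≥ k−1 then B_{m+1} has at least k elements if the non-stabilizer condition holds up to step m = k−1, forcing B_k = ℤ_k once |B_i| reaches k. -/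
/-! Adjoining `z i` turns `B i` into `B i ∪ (B i + z i)`. A translate has the same size as `B i`,
so unless it equals `B i` it is not contained in it, and the union is strictly larger.
Hence `|B i|` grows by at least one per step, and `|B m| ≥ k` forces `B m = ℤ_k`. -/

open Finset

namespace Finset

theorem card_lt_card_union_image_add {G : Type*} [DecidableEq G] [Add G] [IsRightCancelAdd G]
    {s : Finset G} {a : G} (h : s.image (· + a) ≠ s) : #s < #(s ∪ s.image (· + a)) := by
  refine (card_le_card subset_union_left).lt_of_ne fun hcard => h ?_
  have hunion : s ∪ s.image (· + a) = s :=
    (eq_of_subset_of_card_le subset_union_left hcard.ge).symm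
  refine eq_of_subset_of_card_le (union_eq_left.mp hunion) ?_
  exact (card_image_of_injective s (add_left_injective a)).ge

end Finset

section SubsetSums

variable {G : Type*} [DecidableEq G] [AddCommMonoid G]

def subsetSums (z : ℕ → G) (i : ℕ) : Finset G :=
  (range i).powerset.image fun J => ∑ j ∈ J, z j

theorem zero_mem_subsetSums (z : ℕ → G) (i : ℕ) : 0 ∈ subsetSums z i :=
  mem_image.mpr ⟨∅, empty_mem_powerset _, sum_empty⟩

theorem subsetSums_succ (z : ℕ → G) (i : ℕ) :
    subsetSums z (i + 1) = subsetSums z i ∪ (subsetSums z i).image (· + z i) := by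
  have hsum : ∀ J ∈ (range i).powerset, ∑ j ∈ insert i J, z j = (∑ j ∈ J, z j) + z i :=
    fun J hJ => by
      rw [sum_insert fun hi => notMem_range_self (mem_powerset.mp hJ hi), add_comm]
  unfold subsetSums
  rw [range_add_one, powerset_insert, image_union, image_image, image_image]
  exact congrArg _ (image_congr hsum)

theorem le_card_subsetSums [IsRightCancelAdd G] {z : ℕ → G} {m : ℕ}
    (hstab : ∀ i < m, (subsetSums z i).image (· + z i) ≠ subsetSums z i) :
    ∀ i ≤ m, i + 1 ≤ #(subsetSums z i)
  | 0, _ => card_pos.mpr ⟨0, zero_mem_subsetSums z 0⟩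
  | i + 1, hi => by
    have ih := le_card_subsetSums hstab i (Nat.le_of_succ_le hi)
    have hlt := card_lt_card_union_image_add (hstab i hi)
    rw [subsetSums_succ]
    omega

end SubsetSums

/-- Subset-sum sets B_i of z_0,…,z_{i-1} in ℤ_k: if at each step i < m the element z_i does
not stabilize B_i, then |B_i| ≥ i + 1 for all i ≤ m; in particular if k ≤ m + 1 then
B_m = ℤ_k. (Here B_0 = {0}, sums over subsets of {0,…,i-1}.) -/
theorem stmt8 (k m : ℕ) [NeZero k] (z : ℕ → ZMod k) (B : ℕ → Finset (ZMod k))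
    (hB : ∀ i, B i = (Finset.range i).powerset.image (fun J => ∑ j ∈ J, z j))
    (hstab : ∀ i < m, (B i).image (· + z i) ≠ B i) :
    (∀ i ≤ m, i + 1 ≤ (B i).card) ∧ (k ≤ m + 1 → B m = Finset.univ) := by
  obtain rfl : B = subsetSums z := funext hB
  have hcard := le_card_subsetSums hstab
  refine ⟨hcard, fun hk => eq_univ_of_card _ ?_⟩
  have hle := card_le_univ (subsetSums z m)
  have hm := hcard m le_rfl
  rw [ZMod.card] at hle ⊢
  omega
end

section
/- Let k be odd, let C be a cycle of length L in a graph, fix a vertex u on C and a direction of traversal, and for each vertex x on C let f(x) ∈ ℤ_k be (ℓ(C[u,x]) − ℓ(C[x,u])) mod k, where C[u,x] and C[x,u] are the two arcs from u to x and from x to u following the orientation. Let Z be a subgroup of ℤ_k of index d > 1. Then the set K := {x ∈ V(C)\{u} : f(x) ∈ Z} has size at most |V(C)|/d + 1. -/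
/-!
Reduction modulo `d` kills `Z`, so every `j` in the set satisfies `2 j ≡ L (mod d)`. Since `d`
divides the odd number `k`, `2` is invertible modulo `d`, so all such `j` lie in one residue class
modulo `d`, which has at most `L / d + 1` representatives in `[0, L)`.
-/

open Finset

theorem ZMod.castHom_eq_zero_of_mem_addSubgroup {k d : ℕ} [NeZero k] {Z : AddSubgroup (ZMod k)}
    (hd : d * Nat.card Z = k) {x : ZMod k} (hx : x ∈ Z) :
    ZMod.castHom ⟨_, hd.symm⟩ (ZMod d) x = 0 := by
  have hcard : Nat.card Z • x = 0 :=
    addOrderOf_dvd_iff_nsmul_eq_zero.mp (Z.addOrderOf_dvd_natCard hx)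
  have hk : k ∣ Nat.card Z * x.val := by
    rw [← ZMod.natCast_eq_zero_iff, Nat.cast_mul, ZMod.natCast_zmod_val, ← nsmul_eq_mul, hcard]
  have hdvd : d ∣ x.val :=
    (Nat.mul_dvd_mul_iff_left (Nat.card_pos (α := Z))).mp (by rwa [mul_comm, hd])
  rw [ZMod.castHom_apply, ZMod.cast_eq_val, ZMod.natCast_eq_zero_iff]
  exact hdvd

theorem Finset.card_le_div_add_one_of_modEq {s : Finset ℕ} {L d : ℕ} (hd : 0 < d)
    (hs : ∀ x ∈ s, x < L) (hmod : ∀ x ∈ s, ∀ y ∈ s, x ≡ y [MOD d]) : #s ≤ L / d + 1 := by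
  obtain rfl | ⟨a, ha⟩ := s.eq_empty_or_nonempty
  · simp
  calc #s ≤ #{x ∈ range L | x ≡ a [MOD d]} :=
        card_le_card fun x hx => mem_filter.2 ⟨mem_range.2 (hs x hx), hmod x hx a ha⟩
    _ = L.count (· ≡ a [MOD d]) := (Nat.count_eq_card_filter_range _ _).symm
    _ = L / d + if a % d < L % d then 1 else 0 := Nat.count_modEq_card _ hd _
    _ ≤ L / d + 1 := by split_ifs <;> omega

/-- The vertex `x` at position `j` along the cycle, with `u` at position `0`, has
`ℓ(C[u,x]) = j` and `ℓ(C[x,u]) = L - j`. -/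
theorem stmt9_general (k L d : ℕ) (hk : Odd k) (hL : 0 < L)
    (Z : AddSubgroup (ZMod k)) (hd : d * Nat.card Z = k) :
    ((@Finset.filter (Fin L)
        (fun x => ((x.val : ZMod k) - ((L - x.val : ℕ) : ZMod k)) ∈ Z)
        (Classical.decPred _)
        ((Finset.univ : Finset (Fin L)).erase ⟨0, hL⟩)).card : ℝ)
      ≤ (L : ℝ) / (d : ℝ) + 1 := by
  classical
  have : NeZero k := ⟨hk.pos.ne'⟩
  set S := (@Finset.filter (Fin L)
        (fun x => ((x.val : ZMod k) - ((L - x.val : ℕ) : ZMod k)) ∈ Z)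
        (Classical.decPred _)
        ((Finset.univ : Finset (Fin L)).erase ⟨0, hL⟩))
  have hd_odd : Odd d := hk.of_dvd_nat ⟨_, hd.symm⟩
  have hreduce : ∀ j ∈ S, (j.val : ZMod d) - (L - j.val : ZMod d) = 0 := by
    intro j hj
    have h := ZMod.castHom_eq_zero_of_mem_addSubgroup hd (mem_filter.1 hj).2
    rwa [map_sub, map_natCast, map_natCast, Nat.cast_sub j.is_lt.le] at h
  have hmodEq : ∀ a ∈ S.map Fin.valEmbedding, ∀ b ∈ S.map Fin.valEmbedding, a ≡ b [MOD d] := by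
    simp only [mem_map, Fin.valEmbedding_apply]
    rintro _ ⟨a, ha, rfl⟩ _ ⟨b, hb, rfl⟩
    rw [← ZMod.natCast_eq_natCast_iff, ← sub_eq_zero,
      ← ZMod.add_self_eq_zero_iff_eq_zero hd_odd]
    linear_combination hreduce a ha - hreduce b hb
  have hcard : #S ≤ L / d + 1 := by
    rw [← card_map Fin.valEmbedding]
    refine card_le_div_add_one_of_modEq hd_odd.pos ?_ hmodEq
    simp only [mem_map, Fin.valEmbedding_apply]
    rintro _ ⟨j, -, rfl⟩
    exact j.is_lt
  calc (#S : ℝ) ≤ ((L / d : ℕ) : ℝ) + 1 := by exact_mod_cast hcard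
    _ ≤ (L : ℝ) / d + 1 := by gcongr; exact Nat.cast_div_le

/-- On a cycle of length L (vertices indexed by position along the cycle, with u at
position 0, so ℓ(C[u,x]) = j and ℓ(C[x,u]) = L - j for the vertex x at position j),
the set of vertices x ≠ u with (ℓ(C[u,x]) - ℓ(C[x,u])) mod k lying in a subgroup
Z ≤ ℤ_k of index d > 1 has size at most L/d + 1, provided k is odd. -/
theorem stmt9 (k L d : ℕ) [NeZero k] (hk : Odd k) (hL : 0 < L)
    (Z : AddSubgroup (ZMod k)) (hd : d * Nat.card Z = k) (hd1 : 1 < d) :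
    ((@Finset.filter (Fin L)
        (fun x => ((x.val : ZMod k) - ((L - x.val : ℕ) : ZMod k)) ∈ Z)
        (Classical.decPred _)
        ((Finset.univ : Finset (Fin L)).erase ⟨0, hL⟩)).card : ℝ)
      ≤ (L : ℝ) / (d : ℝ) + 1 :=
  stmt9_general k L d hk hL Z hd
end
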